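/- Fix a directed acyclic graph, a quasi-flow f, and a linear order ⊵ on the edge set E. Then there exists a swap-progressive path decomposition of f, and it is unique. -/

import Mathlib

open scoped Classical

namespace StmtDAG

variable {N E : Type*} [Fintype N] [Fintype E] [DecidableEq N] [DecidableEq E]

/-- `(src, tgt, s, t)` describes a directed acyclic graph with finite node type `N` and
finite edge type `E` (parallel edges are allowed, since `E` is an abstract type with
endpoint maps): there is no directed cycle, `s` is the unique node with no incoming edge
(the source), and `t` is the unique node with no outgoing edge (the sink). -/
def IsDAG (src tgt : E → N) (s t : N) : Prop :=
  (∀ a : N, ¬ Relation.TransGen (fun a b => ∃ e, src e = a ∧ tgt e = b) a a) ∧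
  (∀ e, tgt e ≠ s) ∧ (∀ e, src e ≠ t) ∧
  (∀ n, (∀ e, tgt e ≠ n) → n = s) ∧
  (∀ n, (∀ e, src e ≠ n) → n = t)

variable (src tgt : E → N) (s t : N)

/-- A path from `s` to `t`: a nonempty list of consecutive edges starting at `s` and
ending at `t`.  (In a DAG these are in bijective correspondence with the edge *sets* in
which `s` and `t` each appear exactly once and every other node appearing at all appears
exactly once as a head and once as a tail.) -/
structure GPath where
  /-- the edges of the path, in order from the source to the sink -/
  edges : List E
  ne : edges ≠ []
  chain : edges.Chain' fun e f => tgt e = src f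
  first : src (edges.head ne) = s
  last : tgt (edges.getLast ne) = t

/-- A quasi-flow: a nonnegative edge weighting such that, at every node other than the
source and the sink, total in-flow equals total out-flow. -/
def IsQuasiFlow (f : E → ℝ) : Prop :=
  (∀ e, 0 ≤ f e) ∧
  ∀ n : N, n ≠ s → n ≠ t →
    (∑ e : E, if tgt e = n then f e else 0) = (∑ e : E, if src e = n then f e else 0)

/-- `π` is a path decomposition of the quasi-flow `f`: a nonnegative weighting of paths
whose induced edge weights recover `f`. -/
def IsPathDecomp (f : E → ℝ) (π : GPath src tgt s t → ℝ) : Prop :=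
  (∀ P, 0 ≤ π P) ∧
  ∀ e : E, f e = ∑ᶠ P : GPath src tgt s t, if e ∈ P.edges then π P else 0

/-- `P.edges = a ++ b`, split exactly at the node `n`. -/
def SplitsAt (P : GPath src tgt s t) (n : N) (a b : List E) : Prop :=
  P.edges = a ++ b ∧ (∀ h : b ≠ [], src (b.head h) = n) ∧ (b = [] → n = t)

/-- `(Q₁, Q₂)` are the `n`-conjugates of the pair `(P₁, P₂)`, both of which pass through
the node `n`: `Q₁` follows `P₁` up to `n` and `P₂` thereafter, and vice versa. -/
def IsConjAt (n : N) (P₁ P₂ Q₁ Q₂ : GPath src tgt s t) : Prop :=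
  ∃ a₁ b₁ a₂ b₂ : List E,
    SplitsAt src tgt s t P₁ n a₁ b₁ ∧ SplitsAt src tgt s t P₂ n a₂ b₂ ∧
    Q₁.edges = a₁ ++ b₂ ∧ Q₂.edges = a₂ ++ b₁

/-- The indicator (point mass) vector of a path. -/
noncomputable def indP (P₀ : GPath src tgt s t) : GPath src tgt s t → ℝ :=
  fun P => if P = P₀ then 1 else 0

/-- A Ryser swap: `1_{Q₁} + 1_{Q₂} - 1_{P₁} - 1_{P₂}` where `(Q₁, Q₂)` are the
`n`-conjugates of a pair `(P₁, P₂)` compatible at some node `n`. -/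
def IsRyserSwap (R : GPath src tgt s t → ℝ) : Prop :=
  ∃ (n : N) (P₁ P₂ Q₁ Q₂ : GPath src tgt s t),
    IsConjAt src tgt s t n P₁ P₂ Q₁ Q₂ ∧
    R = indP src tgt s t Q₁ + indP src tgt s t Q₂ -
          indP src tgt s t P₁ - indP src tgt s t P₂

/-- The Ryser subspace: the linear span of all Ryser swaps. -/
noncomputable def RyserSub : Submodule ℝ (GPath src tgt s t → ℝ) :=
  Submodule.span ℝ {R | IsRyserSwap src tgt s t R}

/-- `π` is a probability distribution on the path set. -/
def IsDistP (π : GPath src tgt s t → ℝ) : Prop :=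
  (∀ P, 0 ≤ π P) ∧ ∑ᶠ P : GPath src tgt s t, π P = 1


/-- `π` is a swap-progressive path decomposition with respect to the linear order `tri`
on edges (`tri e₁ e₂` means `e₁ ⊵ e₂`): its support can be enumerated `P_1, …, P_K` so
that whenever `P_i` and `P_j` both pass through a node `n` and `i > j`, the edge of `P_i`
leaving `n` is `⊵`-greater than or equal to the edge of `P_j` leaving `n`. -/
def SwapProgG (tri : E → E → Prop) (π : GPath src tgt s t → ℝ) : Prop :=
  ∃ (K : ℕ) (en : Fin K → GPath src tgt s t), Function.Injective en ∧
    Set.range en = {P | π P ≠ 0} ∧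
    ∀ i j : Fin K, j < i → ∀ (n : N) (e₁ e₂ : E),
      e₁ ∈ (en i).edges → e₂ ∈ (en j).edges → src e₁ = n → src e₂ = n → tri e₁ e₂

end StmtDAG

/-!
If `f ≠ 0`, leaving every node by the `⊵`-least edge of positive flow leads from `s` to `t`
(flow conservation keeps the walk going) along a greedy path `G`. In a swap-progressive
decomposition the first path is `G`: every positive edge lies on some path of the support, and
later paths leave each node by `⊵`-larger edges. Its weight is the minimum `w` of `f` along `G`,
since otherwise `G` would still be the greedy path of `f - w • 1_G` and hence also the second
path. Removing `w • 1_G` kills an edge of the support of `f`, so existence and uniqueness follow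
together by induction on that support.
-/

theorem Finset.exists_mem_forall_rel {α : Type*} {r : α → α → Prop} [IsLinearOrder α r]
    {S : Finset α} (hS : S.Nonempty) : ∃ m ∈ S, ∀ x ∈ S, r x m := by
  induction hS using Finset.Nonempty.cons_induction with
  | singleton a => exact ⟨a, by simp, by simp [refl_of r a]⟩
  | cons a S _ _ ih =>
    obtain ⟨m, hm, hmin⟩ := ih
    rcases total_of r a m with h | h
    · exact ⟨m, by simp [hm], by simpa [h] using hmin⟩
    · exact ⟨a, by simp, by simpa [refl_of r a] using fun x hx => _root_.trans (hmin x hx) h⟩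

namespace StmtDAG

open Relation

variable {N E : Type*} {src tgt : E → N} {s t : N}

def Adj (src tgt : E → N) (a b : N) : Prop := ∃ e, src e = a ∧ tgt e = b

theorem IsDAG.wellFounded_transGen [Finite N] (hdag : IsDAG src tgt s t) :
    WellFounded (TransGen (Adj src tgt)) :=
  haveI : IsTrans N (TransGen (Adj src tgt)) := ⟨fun _ _ _ => .trans⟩
  haveI : Std.Irrefl (TransGen (Adj src tgt)) := ⟨hdag.1⟩
  Finite.wellFounded_of_trans_of_irrefl _

theorem IsDAG.wellFounded_transGen_flip [Finite N] (hdag : IsDAG src tgt s t) :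
    WellFounded (flip (TransGen (Adj src tgt))) :=
  haveI : IsTrans N (flip (TransGen (Adj src tgt))) := ⟨fun _ _ _ h h' => h'.trans h⟩
  haveI : Std.Irrefl (flip (TransGen (Adj src tgt))) := ⟨hdag.1⟩
  Finite.wellFounded_of_trans_of_irrefl _

theorem nodup_map_of_isChain (hdag : IsDAG src tgt s t) {g : E → N}
    (hg : ∀ e f, tgt e = src f → TransGen (Adj src tgt) (g e) (g f)) {l : List E}
    (hl : l.IsChain fun e f => tgt e = src f) : (l.map g).Nodup := by
  have : (l.map g).IsChain (TransGen (Adj src tgt)) := List.isChain_map_of_isChain g hg hl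
  exact (List.isChain_iff_pairwise.mp this).imp fun {a b} h (heq : a = b) => hdag.1 _ (heq ▸ h)

namespace GPath

theorem edges_injective : Function.Injective (edges : GPath src tgt s t → List E) := by
  rintro ⟨⟩ ⟨⟩ rfl
  rfl

theorem injOn_src (hdag : IsDAG src tgt s t) (P : GPath src tgt s t) :
    ∀ ⦃e⦄, e ∈ P.edges → ∀ ⦃e'⦄, e' ∈ P.edges → src e = src e' → e = e' :=
  List.inj_on_of_nodup_map <| nodup_map_of_isChain hdag (fun e _ h => .single ⟨e, rfl, h⟩) P.chain

theorem injOn_tgt (hdag : IsDAG src tgt s t) (P : GPath src tgt s t) :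
    ∀ ⦃e⦄, e ∈ P.edges → ∀ ⦃e'⦄, e' ∈ P.edges → tgt e = tgt e' → e = e' :=
  List.inj_on_of_nodup_map <|
    nodup_map_of_isChain hdag (fun _ f h => .single ⟨f, h.symm, rfl⟩) P.chain

theorem exists_src_eq_tgt (P : GPath src tgt s t) {e : E} (he : e ∈ P.edges) (ht : tgt e ≠ t) :
    ∃ e' ∈ P.edges, src e' = tgt e := by
  obtain ⟨i, hi, rfl⟩ := List.getElem_of_mem he
  by_cases h : i + 1 < P.edges.length
  · exact ⟨_, List.getElem_mem h, (List.isChain_iff_getElem.mp P.chain i h).symm⟩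
  · refine absurd ?_ ht
    calc tgt P.edges[i] = tgt (P.edges.getLast P.ne) := by
          rw [List.getLast_eq_getElem]; congr; omega
      _ = t := P.last

theorem exists_tgt_eq_src (P : GPath src tgt s t) {e : E} (he : e ∈ P.edges) (hs : src e ≠ s) :
    ∃ e' ∈ P.edges, tgt e' = src e := by
  obtain ⟨i, hi, rfl⟩ := List.getElem_of_mem he
  cases i with
  | zero => exact absurd (by simpa [List.head_eq_getElem] using P.first) hs
  | succ i => exact ⟨_, List.getElem_mem (by omega), List.isChain_iff_getElem.mp P.chain i hi⟩

theorem exists_tgt_eq_iff (P : GPath src tgt s t) {n : N} (hs : n ≠ s) (ht : n ≠ t) :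
    (∃ e ∈ P.edges, tgt e = n) ↔ ∃ e ∈ P.edges, src e = n := by
  constructor
  · rintro ⟨e, he, rfl⟩
    exact P.exists_src_eq_tgt he ht
  · rintro ⟨e, he, rfl⟩
    exact P.exists_tgt_eq_src he hs

end GPath

theorem IsDAG.finite_gPath [Fintype E] (hdag : IsDAG src tgt s t) : Finite (GPath src tgt s t) :=
  Finite.of_injective (fun P => (⟨P.edges, List.Nodup.of_map src <|
      nodup_map_of_isChain hdag (fun e _ h => .single ⟨e, rfl, h⟩) P.chain⟩ :
      {l : List E // l.Nodup}))
    fun _ _ h => GPath.edges_injective (congrArg Subtype.val h)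

def GPath.indicator [DecidableEq E] (P : GPath src tgt s t) (e : E) : ℝ :=
  if e ∈ P.edges then 1 else 0

theorem GPath.indicator_nonneg [DecidableEq E] (P : GPath src tgt s t) (e : E) :
    0 ≤ P.indicator e := by
  unfold GPath.indicator; split_ifs <;> norm_num

section Flow

variable [Fintype E] [DecidableEq N] {f : E → ℝ}

open Finset in
theorem GPath.sum_indicator_of_injOn [DecidableEq E] (P : GPath src tgt s t) {g : E → N}
    (hg : ∀ ⦃e⦄, e ∈ P.edges → ∀ ⦃e'⦄, e' ∈ P.edges → g e = g e' → e = e') (n : N) :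
    ∑ e with g e = n, P.indicator e = if ∃ e ∈ P.edges, g e = n then 1 else 0 := by
  split_ifs with h
  · obtain ⟨e₀, he₀, rfl⟩ := h
    rw [sum_eq_single_of_mem e₀ (by simp) fun e he hne => ?_]
    · simp [GPath.indicator, he₀]
    · simpa [GPath.indicator] using fun hmem => hne (hg hmem he₀ (mem_filter.mp he).2)
  · push Not at h
    exact sum_eq_zero fun e he => by
      simpa [GPath.indicator] using fun hmem => h e hmem (mem_filter.mp he).2

theorem IsQuasiFlow.sub_smul_indicator [DecidableEq E] (hdag : IsDAG src tgt s t)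
    (hf : IsQuasiFlow src tgt s t f) (P : GPath src tgt s t) {w : ℝ}
    (hw : ∀ e ∈ P.edges, w ≤ f e) : IsQuasiFlow src tgt s t (f - w • P.indicator) := by
  refine ⟨fun e => ?_, fun n hs ht => ?_⟩
  · by_cases he : e ∈ P.edges <;> simp [GPath.indicator, he, hw e, hf.1 e]
  · have key := hf.2 n hs ht
    simp only [← Finset.sum_filter] at key ⊢
    simp only [Pi.sub_apply, Pi.smul_apply, smul_eq_mul, Finset.sum_sub_distrib, ← Finset.mul_sum,
      key, P.sum_indicator_of_injOn (P.injOn_tgt hdag), P.sum_indicator_of_injOn (P.injOn_src hdag),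
      P.exists_tgt_eq_iff hs ht]

theorem IsQuasiFlow.exists_pos_tgt_iff (hf : IsQuasiFlow src tgt s t f) {n : N} (hs : n ≠ s)
    (ht : n ≠ t) : (∃ e, tgt e = n ∧ 0 < f e) ↔ ∃ e, src e = n ∧ 0 < f e := by
  have key := hf.2 n hs ht
  simp only [← Finset.sum_filter] at key
  have hpos (g : E → N) : 0 < ∑ e with g e = n, f e ↔ ∃ e, g e = n ∧ 0 < f e := by
    simp [Finset.sum_pos_iff_of_nonneg fun e _ => hf.1 e]
  rw [← hpos, ← hpos, key]

theorem IsQuasiFlow.exists_pos_src [Finite N] (hdag : IsDAG src tgt s t)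
    (hf : IsQuasiFlow src tgt s t f) (hf0 : f ≠ 0) : ∃ e, src e = s ∧ 0 < f e := by
  obtain ⟨e, he⟩ := Function.ne_iff.mp hf0
  obtain ⟨_, ⟨e, rfl, hpos⟩, hmin⟩ := hdag.wellFounded_transGen.has_min
    {n | ∃ e, src e = n ∧ 0 < f e} ⟨src e, e, rfl, (hf.1 e).lt_of_ne' he⟩
  by_cases hs : src e = s
  · exact ⟨e, hs, hpos⟩
  obtain ⟨e', he', hpos'⟩ := (hf.exists_pos_tgt_iff hs (hdag.2.2.1 e)).mpr ⟨e, rfl, hpos⟩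
  exact absurd (.single ⟨e', rfl, he'⟩) (hmin (src e') ⟨e', rfl, hpos'⟩)

end Flow

section Greedy

variable {tri : E → E → Prop} {f g : E → ℝ}

def IsLeastPos (src : E → N) (tri : E → E → Prop) (f : E → ℝ) (e : E) : Prop :=
  0 < f e ∧ ∀ e', src e' = src e → 0 < f e' → tri e' e

theorem IsLeastPos.eq_of_src_eq (htri : IsLinearOrder E tri) {e e' : E}
    (he : IsLeastPos src tri f e) (he' : IsLeastPos src tri f e') (h : src e = src e') : e = e' :=
  htri.antisymm _ _ (he'.2 e h he.1) (he.2 e' h.symm he'.1)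

theorem IsLeastPos.mono (hgf : ∀ e, g e ≤ f e) {e : E} (he : IsLeastPos src tri f e)
    (hg : 0 < g e) : IsLeastPos src tri g e :=
  ⟨hg, fun e' h h' => he.2 e' h (h'.trans_le (hgf e'))⟩

theorem exists_isLeastPos [Fintype E] (htri : IsLinearOrder E tri) {n : N}
    (h : ∃ e, src e = n ∧ 0 < f e) : ∃ e, src e = n ∧ IsLeastPos src tri f e := by
  obtain ⟨e, he, hmin⟩ := Finset.exists_mem_forall_rel (r := tri)
    (S := Finset.univ.filter fun e => src e = n ∧ 0 < f e) (by simpa [Finset.Nonempty] using h)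
  simp only [Finset.mem_filter, Finset.mem_univ, true_and] at he hmin
  exact ⟨e, he.1, he.2, fun e' h h' => hmin e' ⟨h.trans he.1, h'⟩⟩

def GPath.IsGreedy (tri : E → E → Prop) (f : E → ℝ) (P : GPath src tgt s t) : Prop :=
  ∀ e ∈ P.edges, IsLeastPos src tri f e

theorem eq_nil_iff_tgt_eq (hdag : IsDAG src tgt s t) {e : E} {r : List E}
    (hc : (e :: r).IsChain fun e f => tgt e = src f)
    (hlast : tgt ((e :: r).getLast (List.cons_ne_nil e r)) = t) : r = [] ↔ tgt e = t := by
  cases r with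
  | nil => simpa using hlast
  | cons g r =>
    rw [List.isChain_cons_cons] at hc
    simpa [hc.1] using hdag.2.2.1 g

theorem eq_of_forall_isLeastPos (hdag : IsDAG src tgt s t) (htri : IsLinearOrder E tri) :
    ∀ {l l' : List E} (hl : l ≠ []) (hl' : l' ≠ []),
      l.IsChain (fun e f => tgt e = src f) → l'.IsChain (fun e f => tgt e = src f) →
      (∀ e ∈ l, IsLeastPos src tri f e) → (∀ e ∈ l', IsLeastPos src tri f e) →
      src (l.head hl) = src (l'.head hl') →
      tgt (l.getLast hl) = t → tgt (l'.getLast hl') = t → l = l'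
  | e :: r, e' :: r', _, _, hc, hc', hg, hg', hhead, hlast, hlast' => by
    obtain rfl : e = e' := (hg e (by simp)).eq_of_src_eq htri (hg' e' (by simp)) hhead
    have hnil := (eq_nil_iff_tgt_eq hdag hc hlast).trans (eq_nil_iff_tgt_eq hdag hc' hlast').symm
    match r, r', hnil with
    | [], [], _ => rfl
    | [], _ :: _, h | _ :: _, [], h => simp at h
    | g :: r, g' :: r', _ =>
      rw [List.isChain_cons_cons] at hc hc'
      congr 1
      exact eq_of_forall_isLeastPos hdag htri (List.cons_ne_nil g r) (List.cons_ne_nil g' r')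
        hc.2 hc'.2 (fun x hx => hg x (.tail _ hx)) (fun x hx => hg' x (.tail _ hx))
        (by simp [← hc.1, ← hc'.1]) (by simpa using hlast) (by simpa using hlast')

theorem GPath.eq_of_isGreedy (hdag : IsDAG src tgt s t) (htri : IsLinearOrder E tri)
    {P Q : GPath src tgt s t} (hP : P.IsGreedy tri f) (hQ : Q.IsGreedy tri f) : P = Q :=
  GPath.edges_injective <| eq_of_forall_isLeastPos hdag htri P.ne Q.ne P.chain Q.chain hP hQ
    (P.first.trans Q.first.symm) P.last Q.last

variable [Finite N] [Fintype E] [DecidableEq N]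

theorem exists_isLeastPos_walk (hdag : IsDAG src tgt s t) (htri : IsLinearOrder E tri)
    (hf : IsQuasiFlow src tgt s t f) (n : N) (hn : ∃ e, src e = n ∧ 0 < f e) :
    ∃ (l : List E) (hl : l ≠ []), l.IsChain (fun e f => tgt e = src f) ∧ src (l.head hl) = n ∧
      tgt (l.getLast hl) = t ∧ ∀ e ∈ l, IsLeastPos src tri f e := by
  induction n using hdag.wellFounded_transGen_flip.induction with
  | _ n ih =>
    obtain ⟨m, rfl, hm⟩ := exists_isLeastPos htri hn
    by_cases ht : tgt m = t
    · exact ⟨[m], List.cons_ne_nil _ _, .singleton m, rfl, ht, by simpa using hm⟩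
    obtain ⟨l, hl, hc, hhead, hlast, hleast⟩ := ih (tgt m) (.single ⟨m, rfl, rfl⟩)
      ((hf.exists_pos_tgt_iff (hdag.2.1 m) ht).mp ⟨m, rfl, hm.1⟩)
    obtain ⟨g, l, rfl⟩ := List.exists_cons_of_ne_nil hl
    exact ⟨m :: g :: l, List.cons_ne_nil _ _, List.isChain_cons_cons.mpr ⟨hhead.symm, hc⟩, rfl,
      by simpa using hlast, by simpa [hm] using hleast⟩

theorem exists_isGreedy (hdag : IsDAG src tgt s t) (htri : IsLinearOrder E tri)
    (hf : IsQuasiFlow src tgt s t f) (hf0 : f ≠ 0) : ∃ P : GPath src tgt s t, P.IsGreedy tri f := by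
  obtain ⟨l, hl, hc, hhead, hlast, hleast⟩ :=
    exists_isLeastPos_walk hdag htri hf s (hf.exists_pos_src hdag hf0)
  exact ⟨⟨l, hl, hc, hhead, hlast⟩, hleast⟩

end Greedy

section Decomp

variable [DecidableEq E] {f : E → ℝ} {π : GPath src tgt s t → ℝ}

theorem IsPathDecomp.le_of_mem [Finite (GPath src tgt s t)] (hπ : IsPathDecomp src tgt s t f π)
    {P : GPath src tgt s t} {e : E} (he : e ∈ P.edges) : π P ≤ f e := by
  rw [hπ.2 e]
  simpa [he] using single_le_finsum (f := fun Q => if e ∈ Q.edges then π Q else 0) P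
    (Set.toFinite _) fun Q => by split_ifs; exacts [hπ.1 Q, le_rfl]

theorem IsPathDecomp.pos_of_mem [Finite (GPath src tgt s t)] (hπ : IsPathDecomp src tgt s t f π)
    {P : GPath src tgt s t} (hP : π P ≠ 0) {e : E} (he : e ∈ P.edges) : 0 < f e :=
  ((hπ.1 P).lt_of_ne' hP).trans_le (hπ.le_of_mem he)

theorem IsPathDecomp.exists_of_pos (hπ : IsPathDecomp src tgt s t f π) {e : E} (he : 0 < f e) :
    ∃ P, π P ≠ 0 ∧ e ∈ P.edges := by
  by_contra! h
  rw [hπ.2 e, finsum_eq_zero_of_forall_eq_zero fun P => ite_eq_right_iff.mpr fun hP =>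
    by_contra fun h0 => h P h0 hP] at he
  exact he.false

theorem finsum_ite_mem_add_smul_indP [Finite (GPath src tgt s t)] (π : GPath src tgt s t → ℝ)
    (G : GPath src tgt s t) (c : ℝ) (e : E) :
    (∑ᶠ P : GPath src tgt s t, if e ∈ P.edges then (π + c • indP src tgt s t G) P else 0) =
      (∑ᶠ P : GPath src tgt s t, if e ∈ P.edges then π P else 0) + c * G.indicator e := by
  have hsplit (P : GPath src tgt s t) :
      (if e ∈ P.edges then (π + c • indP src tgt s t G) P else 0) =
        (if e ∈ P.edges then π P else 0) + if P = G then c * G.indicator e else 0 := by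
    rcases eq_or_ne P G with rfl | hP <;> by_cases he : e ∈ P.edges <;>
      simp [indP, GPath.indicator, *]
  simp_rw [hsplit]
  rw [finsum_add_distrib (Set.toFinite _) (Set.toFinite _),
    finsum_eq_single _ G fun P hP => if_neg hP, if_pos rfl]

theorem IsPathDecomp.add_smul_indP [Finite (GPath src tgt s t)]
    (hπ : IsPathDecomp src tgt s t f π) (G : GPath src tgt s t) {c : ℝ} (hc : 0 ≤ c) :
    IsPathDecomp src tgt s t (f + c • G.indicator) (π + c • indP src tgt s t G) :=
  ⟨fun P => add_nonneg (hπ.1 P) (mul_nonneg hc (by unfold indP; split_ifs <;> norm_num)),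
    fun e => by rw [finsum_ite_mem_add_smul_indP, ← hπ.2 e]; rfl⟩

theorem IsPathDecomp.sub_smul_indP [Finite (GPath src tgt s t)]
    (hπ : IsPathDecomp src tgt s t f π) (G : GPath src tgt s t) {c : ℝ} (hc : c ≤ π G) :
    IsPathDecomp src tgt s t (f - c • G.indicator) (π - c • indP src tgt s t G) := by
  refine ⟨fun P => ?_, fun e => ?_⟩
  · by_cases hP : P = G
    · simpa [indP, hP] using hc
    · simpa [indP, hP] using hπ.1 P
  · rw [sub_eq_add_neg π, ← neg_smul, finsum_ite_mem_add_smul_indP, ← hπ.2 e]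
    simp [sub_eq_add_neg]

end Decomp

section SwapProg

variable {tri : E → E → Prop} {π : GPath src tgt s t → ℝ}

def IsSwapProgEnum (tri : E → E → Prop) (π : GPath src tgt s t → ℝ) {K : ℕ}
    (en : Fin K → GPath src tgt s t) : Prop :=
  Function.Injective en ∧ Set.range en = {P | π P ≠ 0} ∧
    ∀ i j : Fin K, j < i → ∀ (n : N) (e₁ e₂ : E),
      e₁ ∈ (en i).edges → e₂ ∈ (en j).edges → src e₁ = n → src e₂ = n → tri e₁ e₂

theorem IsSwapProgEnum.ne_zero {K : ℕ} {en : Fin K → GPath src tgt s t}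
    (hen : IsSwapProgEnum tri π en) (i : Fin K) : π (en i) ≠ 0 :=
  show en i ∈ {P | π P ≠ 0} from hen.2.1 ▸ Set.mem_range_self i

theorem setOf_add_smul_indP_ne_zero {G : GPath src tgt s t} (hG : π G = 0) {c : ℝ} (hc : c ≠ 0) :
    {P | (π + c • indP src tgt s t G) P ≠ 0} = insert G {P | π P ≠ 0} := by
  ext P
  rcases eq_or_ne P G with rfl | hP <;> simp [indP, *]

theorem isSwapProgEnum_cons_iff {G : GPath src tgt s t} (hG : π G = 0) {c : ℝ} (hc : c ≠ 0)
    {K : ℕ} {en : Fin K → GPath src tgt s t} :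
    IsSwapProgEnum tri (π + c • indP src tgt s t G) (Fin.cons G en : Fin (K + 1) → _) ↔
      IsSwapProgEnum tri π en ∧ ∀ (i : Fin K) (n : N) (e₁ e₂ : E),
        e₁ ∈ (en i).edges → e₂ ∈ G.edges → src e₁ = n → src e₂ = n → tri e₁ e₂ := by
  have hG' : G ∉ {P | π P ≠ 0} := by simpa using hG
  simp only [IsSwapProgEnum, Fin.cons_injective_iff, Fin.range_cons,
    setOf_add_smul_indP_ne_zero hG hc, Fin.forall_fin_succ, Fin.cons_zero, Fin.cons_succ,
    Fin.succ_lt_succ_iff, Fin.not_lt_zero, Fin.succ_pos, false_implies, true_implies,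
    implies_true, true_and, forall_and]
  have hrange (hGr : G ∉ Set.range en) :
      insert G (Set.range en) = insert G {P | π P ≠ 0} ↔ Set.range en = {P | π P ≠ 0} :=
    ⟨fun h => by simpa [Set.insert_sdiff_self_of_notMem, hGr, hG'] using congrArg (· \ {G}) h,
      fun h => h ▸ rfl⟩
  constructor
  · rintro ⟨⟨hGr, hinj⟩, hr, hfirst, hord⟩
    exact ⟨⟨hinj, (hrange hGr).mp hr, hord⟩, hfirst⟩
  · rintro ⟨⟨hinj, hr, hord⟩, hfirst⟩
    have hGr : G ∉ Set.range en := hr ▸ hG'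
    exact ⟨⟨hGr, hinj⟩, (hrange hGr).mpr hr, hfirst, hord⟩

theorem IsSwapProgEnum.tail {K : ℕ} {en : Fin (K + 1) → GPath src tgt s t}
    (hen : IsSwapProgEnum tri π en) :
    IsSwapProgEnum tri (π - π (en 0) • indP src tgt s t (en 0)) (Fin.tail en) := by
  have h0 : (π - π (en 0) • indP src tgt s t (en 0)) (en 0) = 0 := by simp [indP]
  refine ((isSwapProgEnum_cons_iff h0 (hen.ne_zero 0)).mp ?_).1
  rwa [sub_add_cancel, Fin.cons_self_tail]

theorem IsSwapProgEnum.length_pos [DecidableEq E] {f : E → ℝ} {K : ℕ}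
    {en : Fin K → GPath src tgt s t}
    (hen : IsSwapProgEnum tri π en) (hπ : IsPathDecomp src tgt s t f π) {e : E} (he : 0 < f e) :
    0 < K := by
  obtain ⟨P, hP, -⟩ := hπ.exists_of_pos he
  obtain ⟨i, -⟩ : P ∈ Set.range en := hen.2.1 ▸ hP
  exact i.pos

end SwapProg

section Unique

variable [DecidableEq E] [Finite (GPath src tgt s t)] {tri : E → E → Prop} {f : E → ℝ}
  {π : GPath src tgt s t → ℝ}

theorem IsSwapProgEnum.isGreedy_zero (hdag : IsDAG src tgt s t) (htri : IsLinearOrder E tri)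
    (hπ : IsPathDecomp src tgt s t f π) {K : ℕ} {en : Fin (K + 1) → GPath src tgt s t}
    (hen : IsSwapProgEnum tri π en) : (en 0).IsGreedy tri f := by
  intro e he
  refine ⟨hπ.pos_of_mem (hen.ne_zero 0) he, fun e' hsrc hpos => ?_⟩
  obtain ⟨P, hP, he'⟩ := hπ.exists_of_pos hpos
  obtain ⟨i, rfl⟩ : P ∈ Set.range en := hen.2.1 ▸ hP
  rcases Fin.eq_zero_or_eq_succ i with rfl | ⟨i, rfl⟩
  · rw [(en 0).injOn_src hdag he' he hsrc]
    exact htri.refl e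
  · exact hen.2.2 _ 0 (Fin.succ_pos i) _ e' e he' he hsrc rfl

theorem IsSwapProgEnum.exists_edge_eq_weight (hdag : IsDAG src tgt s t)
    (htri : IsLinearOrder E tri) (hπ : IsPathDecomp src tgt s t f π) {K : ℕ}
    {en : Fin (K + 1) → GPath src tgt s t} (hen : IsSwapProgEnum tri π en) :
    ∃ e ∈ (en 0).edges, f e = π (en 0) := by
  by_contra! h
  set G := en 0
  have hπ' := hπ.sub_smul_indP G le_rfl
  have hG' : G.IsGreedy tri (f - π G • G.indicator) := fun e he =>
    (hen.isGreedy_zero hdag htri hπ e he).mono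
      (fun e' => sub_le_self _ (smul_nonneg (hπ.1 G) (G.indicator_nonneg e')))
      (by simpa [GPath.indicator, he] using (hπ.le_of_mem he).lt_of_ne (h e he).symm)
  obtain ⟨K, rfl⟩ := Nat.exists_eq_add_one_of_ne_zero
    (hen.tail.length_pos hπ' (hG' _ (List.head_mem G.ne)).1).ne'
  have := GPath.eq_of_isGreedy hdag htri (hen.tail.isGreedy_zero hdag htri hπ') hG'
  exact Fin.succ_ne_zero 0 (hen.1 this)

theorem existsUnique_zero :
    ∃! π, IsPathDecomp src tgt s t 0 π ∧ SwapProgG src tgt s t tri π := by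
  refine ⟨0, ⟨⟨fun _ => le_rfl, fun e => by simp⟩, 0, Fin.elim0, fun i => i.elim0, by simp,
    fun i => i.elim0⟩, fun ρ ⟨hρ, _⟩ => funext fun P => ?_⟩
  exact le_antisymm (by simpa using hρ.le_of_mem (List.head_mem P.ne)) (hρ.1 P)

theorem existsUnique_of_sub_isGreedy (hdag : IsDAG src tgt s t) (htri : IsLinearOrder E tri)
    {G : GPath src tgt s t} (hG : G.IsGreedy tri f) {e₀ : E} (he₀ : e₀ ∈ G.edges)
    (hmin : ∀ e ∈ G.edges, f e₀ ≤ f e)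
    (h : ∃! π', IsPathDecomp src tgt s t (f - f e₀ • G.indicator) π' ∧
      SwapProgG src tgt s t tri π') :
    ∃! π, IsPathDecomp src tgt s t f π ∧ SwapProgG src tgt s t tri π := by
  obtain ⟨π', ⟨hπ', K, en, (hen : IsSwapProgEnum tri π' en)⟩, huniq⟩ := h
  have hw : 0 < f e₀ := (hG e₀ he₀).1
  have hπ'G : π' G = 0 :=
    le_antisymm (by simpa [GPath.indicator, he₀] using hπ'.le_of_mem he₀) (hπ'.1 G)
  refine ⟨π' + f e₀ • indP src tgt s t G, ⟨by simpa using hπ'.add_smul_indP G hw.le, K + 1,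
    Fin.cons G en, (isSwapProgEnum_cons_iff hπ'G hw.ne').mpr ⟨hen, ?_⟩⟩, ?_⟩
  · intro i n e₁ e₂ he₁ he₂ h₁ h₂
    refine (hG e₂ he₂).2 e₁ (h₁.trans h₂.symm) ((hπ'.pos_of_mem (hen.ne_zero i) he₁).trans_le ?_)
    exact sub_le_self _ (smul_nonneg hw.le (G.indicator_nonneg e₁))
  · rintro ρ ⟨hρ, K', en', (hen' : IsSwapProgEnum tri ρ en')⟩
    obtain ⟨K', rfl⟩ := Nat.exists_eq_add_one_of_ne_zero (hen'.length_pos hρ hw).ne'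
    obtain rfl : en' 0 = G := GPath.eq_of_isGreedy hdag htri (hen'.isGreedy_zero hdag htri hρ) hG
    have hρG : ρ (en' 0) = f e₀ := by
      obtain ⟨e, he, hfe⟩ := hen'.exists_edge_eq_weight hdag htri hρ
      exact le_antisymm (hρ.le_of_mem he₀) (hfe ▸ hmin e he)
    have := huniq _ ⟨hρ.sub_smul_indP _ hρG.ge, K', Fin.tail en', hρG ▸ hen'.tail⟩
    rw [← this, sub_add_cancel]

end Unique

theorem ncard_support_sub_smul_indicator_lt [Finite E] [DecidableEq E] {f : E → ℝ}
    (G : GPath src tgt s t) (hG : ∀ e ∈ G.edges, 0 < f e) {e₀ : E} (he₀ : e₀ ∈ G.edges) :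
    (Function.support (f - f e₀ • G.indicator)).ncard < (Function.support f).ncard := by
  refine Set.ncard_lt_ncard ((Set.ssubset_iff_of_subset fun e he => ?_).mpr
    ⟨e₀, (hG e₀ he₀).ne', by simp [GPath.indicator, he₀]⟩)
  by_cases h : e ∈ G.edges
  · exact (hG e h).ne'
  · simpa [GPath.indicator, h] using he

end StmtDAG

namespace StmtDAG

variable {N E : Type*} [Fintype N] [Fintype E] [DecidableEq N] [DecidableEq E]

variable (src tgt : E → N) (s t : N)

theorem statement18 (hdag : IsDAG src tgt s t) (f : E → ℝ)
    (hf : IsQuasiFlow src tgt s t f)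
    (tri : E → E → Prop) (htri : IsLinearOrder E tri) :
    ∃! π : GPath src tgt s t → ℝ,
      IsPathDecomp src tgt s t f π ∧ SwapProgG src tgt s t tri π := by
  have := hdag.finite_gPath
  induction hk : (Function.support f).ncard using Nat.strong_induction_on generalizing f with
  | _ k ih =>
    obtain rfl | hf0 := eq_or_ne f 0
    · exact existsUnique_zero
    obtain ⟨G, hG⟩ := exists_isGreedy hdag htri hf hf0
    obtain ⟨e₀, he₀, hmin⟩ := G.edges.toFinset.exists_min_image f
      ⟨_, List.mem_toFinset.mpr (List.head_mem G.ne)⟩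
    simp only [List.mem_toFinset] at he₀ hmin
    refine existsUnique_of_sub_isGreedy hdag htri hG he₀ hmin
      (ih _ ?_ _ (hf.sub_smul_indicator hdag G hmin) rfl)
    exact hk ▸ ncard_support_sub_smul_indicator_lt G (fun e he => (hG e he).1) he₀

end StmtDAG
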